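/- arXiv:math/0203221 — 5 statements merged into one kernel-verified Lean document; each statement's English description precedes it below -/
import Mathlib

section
/- Let (Q_t)_{t≥0} be a Feller convolution semigroup on the space (F,𝓕) of measurable self-maps of a compact metric space M. Define for each n ≥ 1, f ∈ C(Mⁿ), x ∈ Mⁿ: P_t^{(n)} f(x) = ∫ f(φ(x₁),…,φ(xₙ)) Q_t(dφ). Then (P_t^{(n)})_{n≥1} is a compatible family of Feller semigroups on the spaces Mⁿ, and it satisfies P_t^{(2)}(f⊗f)(x,x) = P_t^{(1)}(f²)(x) for all f ∈ C(M), x ∈ M, t ≥ 0. -/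
open MeasureTheory Filter Topology
open scoped NNReal

/-- The space of measurable self-maps of a compact metric space. -/
def FF (M : Type*) [MeasurableSpace M] : Type _ := {φ : M → M // Measurable φ}

/-- The σ-field on `FF M` generated by the evaluation maps `φ ↦ φ(x)`. -/
instance FF.instMeasurableSpace (M : Type*) [MeasurableSpace M] : MeasurableSpace (FF M) :=
  ⨆ x : M, MeasurableSpace.comap (fun φ : FF M => φ.1 x) inferInstance

/-- Composition in `FF M`. -/
def FF.comp {M : Type*} [MeasurableSpace M] (φ ψ : FF M) : FF M :=
  ⟨φ.1 ∘ ψ.1, φ.2.comp ψ.2⟩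

/-- The `n`-point operators associated with a family of measures on `FF M`:
`Pn Q n t f x = ∫ f(φ(x₁),…,φ(xₙ)) Q_t(dφ)`. -/
noncomputable def Pn {M : Type*} [MeasurableSpace M] (Q : ℝ≥0 → Measure (FF M))
    (n : ℕ) (t : ℝ≥0) (f : (Fin n → M) → ℝ) (x : Fin n → M) : ℝ :=
  ∫ φ : FF M, f (fun i => φ.1 (x i)) ∂ Q t

/-!
The Markov property, compatibility and the identity for `f ⊗ f` are read off the definition,
and the semigroup law is Fubini applied to `Q_{s+t} = law of φ ∘ ψ` (with `φ ∼ Q_t`, `ψ ∼ Q_s`),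
the presentation `J` agreeing with `φ` at every fixed point almost surely.

The Feller hypotheses only control one-point motions, while the conclusions concern continuous
functions of `n` points. The bridge is a domination inequality: if `s` is a finite `r`-net of `M`,
two points at distance `≥ 3r` have distance profiles to `s` differing by at least `r`, so by
uniform continuity any continuous `f` on `Mⁿ` satisfies
`|f a - f b| ≤ ε + K ∑ᵢ ∑_{z ∈ s} (d(aᵢ, z) - d(bᵢ, z))²`.
Integrating it, the Feller conditions for the finitely many functions `d(·, z)` give both
continuity statements.
-/

namespace FF

variable {M : Type*} [MeasurableSpace M]

lemma measurable_eval (x : M) : Measurable fun φ : FF M => φ.1 x :=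
  measurable_iff_comap_le.2 <|
    le_iSup (fun x : M => MeasurableSpace.comap (fun φ : FF M => φ.1 x) inferInstance) x

lemma measurable_eval_pi {ι : Type*} (x : ι → M) :
    Measurable fun φ : FF M => fun i => φ.1 (x i) :=
  measurable_pi_lambda _ fun i => measurable_eval (x i)

lemma measurable_of_eval {α : Type*} [MeasurableSpace α] {g : α → FF M}
    (h : ∀ x, Measurable fun a => (g a).1 x) : Measurable g := by
  rw [measurable_iff_comap_le]
  refine (MeasurableSpace.comap_iSup ..).trans_le (iSup_le fun x => ?_)
  rw [MeasurableSpace.comap_comp]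
  exact measurable_iff_comap_le.1 (h x)

lemma measurable_comp_left {J : FF M → FF M}
    (hJ : Measurable fun p : M × FF M => (J p.2).1 p.1) :
    Measurable fun p : FF M × FF M => FF.comp (J p.1) p.2 :=
  measurable_of_eval fun x =>
    hJ.comp (((measurable_eval x).comp measurable_snd).prodMk measurable_fst)

end FF

lemma Continuous.integrable_comp_of_compactSpace {α X : Type*} [MeasurableSpace α]
    [TopologicalSpace X] [CompactSpace X] [MeasurableSpace X] [OpensMeasurableSpace X]
    {μ : Measure α} [IsFiniteMeasure μ] {h : X → ℝ} (hh : Continuous h) {A : α → X}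
    (hA : Measurable A) : Integrable (fun a => h (A a)) μ := by
  obtain ⟨C, hC⟩ := isCompact_univ.exists_bound_of_continuousOn hh.continuousOn
  exact .of_bound (hh.measurable.comp hA).aestronglyMeasurable C
    (.of_forall fun a => hC _ (Set.mem_univ _))

lemma abs_integral_sub_le_of_abs_sub_le {α : Type*} [MeasurableSpace α] {μ : Measure α}
    [IsProbabilityMeasure μ] {F G H : α → ℝ} (hF : Integrable F μ) (hG : Integrable G μ)
    (hH : Integrable H μ) {ε K : ℝ} (hdom : ∀ a, |F a - G a| ≤ ε + K * H a) :
    |∫ a, F a ∂μ - ∫ a, G a ∂μ| ≤ ε + K * ∫ a, H a ∂μ :=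
  calc |∫ a, F a ∂μ - ∫ a, G a ∂μ| = |∫ a, (F a - G a) ∂μ| := by rw [integral_sub hF hG]
    _ ≤ ∫ a, |F a - G a| ∂μ := abs_integral_le_integral_abs
    _ ≤ ∫ a, (ε + K * H a) ∂μ :=
        integral_mono (hF.sub hG).abs ((integrable_const ε).add (hH.const_mul K)) hdom
    _ = ε + K * ∫ a, H a ∂μ := by
        rw [integral_add (integrable_const ε) (hH.const_mul K), integral_const_mul]
        simp

section Domination

variable {ι M : Type*} [Fintype ι] [MetricSpace M]

lemma sq_le_sum_sq_dist_sub_of_le_dist {s : Finset M} {r : ℝ}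
    (hs : ∀ m : M, ∃ z ∈ s, dist m z < r) {a b : ι → M} {i : ι}
    (hi : 3 * r ≤ dist (a i) (b i)) :
    r ^ 2 ≤ ∑ j, ∑ z ∈ s, (dist (a j) z - dist (b j) z) ^ 2 := by
  obtain ⟨z, hz, haz⟩ := hs (a i)
  have hr : 0 ≤ r := dist_nonneg.trans haz.le
  have hprofile : r ≤ dist (b i) z - dist (a i) z := by
    linarith [dist_triangle (a i) z (b i), dist_comm z (b i)]
  calc r ^ 2 ≤ (dist (a i) z - dist (b i) z) ^ 2 := by nlinarith
    _ ≤ ∑ z ∈ s, (dist (a i) z - dist (b i) z) ^ 2 :=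
        Finset.single_le_sum (f := fun z => (dist (a i) z - dist (b i) z) ^ 2)
          (fun _ _ => sq_nonneg _) hz
    _ ≤ ∑ j, ∑ z ∈ s, (dist (a j) z - dist (b j) z) ^ 2 :=
        Finset.single_le_sum (f := fun j => ∑ z ∈ s, (dist (a j) z - dist (b j) z) ^ 2)
          (fun _ _ => Finset.sum_nonneg fun _ _ => sq_nonneg _) (Finset.mem_univ i)

lemma exists_abs_sub_le_add_mul_sum_sq_dist_sub [CompactSpace M] {f : (ι → M) → ℝ}
    (hf : Continuous f) {ε : ℝ} (hε : 0 < ε) :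
    ∃ (s : Finset M) (K : ℝ), 0 ≤ K ∧ ∀ a b : ι → M,
      |f a - f b| ≤ ε + K * ∑ i, ∑ z ∈ s, (dist (a i) z - dist (b i) z) ^ 2 := by
  set F := BoundedContinuousFunction.mkOfCompact ⟨f, hf⟩
  obtain ⟨η, hη, hfη⟩ := Metric.uniformContinuous_iff.1
    (CompactSpace.uniformContinuous_of_continuous hf) ε hε
  set r := η / 3 with hr
  obtain ⟨s, -, hcover⟩ := isCompact_univ.elim_nhds_subcover (fun z : M => Metric.ball z r)
    fun z _ => Metric.ball_mem_nhds z (by positivity)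
  have hs : ∀ m : M, ∃ z ∈ s, dist m z < r := fun m => by
    simpa using hcover (Set.mem_univ m)
  have hK : 0 ≤ 2 * ‖F‖ / r ^ 2 := by positivity
  refine ⟨s, 2 * ‖F‖ / r ^ 2, hK, fun a b => ?_⟩
  by_cases hclose : ∀ i, dist (a i) (b i) < η
  · have hsum : 0 ≤ ∑ i, ∑ z ∈ s, (dist (a i) z - dist (b i) z) ^ 2 := by positivity
    have := hfη ((dist_pi_lt_iff hη).2 hclose)
    rw [Real.dist_eq] at this
    linarith [mul_nonneg hK hsum]
  · push Not at hclose
    obtain ⟨i, hi⟩ := hclose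
    have hnet := sq_le_sum_sq_dist_sub_of_le_dist hs (by linarith)
    calc |f a - f b| ≤ ‖F a‖ + ‖F b‖ := abs_sub _ _
      _ ≤ 2 * ‖F‖ / r ^ 2 * r ^ 2 := by
          rw [div_mul_cancel₀ _ (by positivity)]
          linarith [F.norm_coe_le_norm a, F.norm_coe_le_norm b]
      _ ≤ ε + 2 * ‖F‖ / r ^ 2 * ∑ i, ∑ z ∈ s, (dist (a i) z - dist (b i) z) ^ 2 := by
          linarith [mul_le_mul_of_nonneg_left hnet hK]

end Domination

section CompactMetric

variable {M : Type*} [MetricSpace M] [CompactSpace M] [MeasurableSpace M] [BorelSpace M]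

lemma tendsto_integral_sub_of_tendsto_integral_sq_dist_sub {ι κ α : Type*} [Fintype ι]
    [MeasurableSpace α] {L : Filter κ} {μ : κ → Measure α} [∀ p, IsProbabilityMeasure (μ p)]
    {A B : κ → α → ι → M} (hA : ∀ p, Measurable (A p)) (hB : ∀ p, Measurable (B p))
    (h : ∀ i z, Tendsto (fun p => ∫ a, (dist (A p a i) z - dist (B p a i) z) ^ 2 ∂μ p) L (𝓝 0))
    {f : (ι → M) → ℝ} (hf : Continuous f) :
    Tendsto (fun p => ∫ a, f (A p a) ∂μ p - ∫ a, f (B p a) ∂μ p) L (𝓝 0) := by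
  rw [Metric.tendsto_nhds]
  intro ε hε
  obtain ⟨s, K, hK, hdom⟩ := exists_abs_sub_le_add_mul_sum_sq_dist_sub hf (half_pos hε)
  have hsmall : Tendsto (fun p => K * ∑ i, ∑ z ∈ s,
      ∫ a, (dist (A p a i) z - dist (B p a i) z) ^ 2 ∂μ p) L (𝓝 0) := by
    simpa using (tendsto_finsetSum _ fun i _ => tendsto_finsetSum s fun z _ => h i z).const_mul K
  filter_upwards [hsmall.eventually (gt_mem_nhds (half_pos hε))] with p hp
  have hsq : ∀ i z, Integrable (fun a => (dist (A p a i) z - dist (B p a i) z) ^ 2) (μ p) :=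
    fun i z => Continuous.integrable_comp_of_compactSpace
      (h := fun q : M × M => (dist q.1 z - dist q.2 z) ^ 2) (by fun_prop)
      (((measurable_pi_apply i).comp (hA p)).prodMk ((measurable_pi_apply i).comp (hB p)))
  have hest := abs_integral_sub_le_of_abs_sub_le (hf.integrable_comp_of_compactSpace (hA p))
    (hf.integrable_comp_of_compactSpace (hB p))
    (integrable_finsetSum _ fun i _ => integrable_finsetSum s fun z _ => hsq i z)
    fun a => hdom (A p a) (B p a)
  rw [integral_finsetSum _ fun i _ => integrable_finsetSum s fun z _ => hsq i z] at hest
  simp_rw [integral_finsetSum s fun z _ => hsq _ z] at hest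
  rw [Real.dist_0_eq_abs]
  linarith

lemma continuous_Pn {Q : ℝ≥0 → Measure (FF M)} [∀ t, IsProbabilityMeasure (Q t)] {t : ℝ≥0}
    (hQ : ∀ g : C(M, ℝ), ∀ ε > (0 : ℝ), ∃ δ > (0 : ℝ), ∀ x y : M,
      dist x y < δ → ∫ φ : FF M, (g (φ.1 x) - g (φ.1 y)) ^ 2 ∂Q t < ε)
    {n : ℕ} {f : (Fin n → M) → ℝ} (hf : Continuous f) : Continuous (Pn Q n t f) := by
  have hpoint (z x : M) : Tendsto (fun y => ∫ φ : FF M,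
      (dist (φ.1 y) z - dist (φ.1 x) z) ^ 2 ∂Q t) (𝓝 x) (𝓝 0) := by
    rw [Metric.tendsto_nhds]
    intro ε hε
    obtain ⟨δ, hδ, hclose⟩ := hQ ⟨(dist · z), by fun_prop⟩ ε hε
    filter_upwards [Metric.ball_mem_nhds x hδ] with y hy
    rw [Real.dist_0_eq_abs, abs_of_nonneg (integral_nonneg fun _ => sq_nonneg _)]
    exact hclose y x hy
  refine continuous_iff_continuousAt.2 fun x => tendsto_sub_nhds_zero_iff.1 ?_
  exact tendsto_integral_sub_of_tendsto_integral_sq_dist_sub (μ := fun _ => Q t)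
    (fun y => FF.measurable_eval_pi y) (fun _ => FF.measurable_eval_pi x)
    (fun i z => (hpoint z (x i)).comp ((continuous_apply i).tendsto x)) hf

lemma tendsto_Pn_nhds_zero {Q : ℝ≥0 → Measure (FF M)} [∀ t, IsProbabilityMeasure (Q t)]
    (hQ : ∀ g : C(M, ℝ), ∀ ε > (0 : ℝ), ∃ δ > (0 : ℝ≥0), ∀ t < δ, ∀ x : M,
      ∫ φ : FF M, (g (φ.1 x) - g x) ^ 2 ∂Q t < ε)
    {n : ℕ} {f : (Fin n → M) → ℝ} (hf : Continuous f) (x : Fin n → M) :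
    Tendsto (fun t => Pn Q n t f x) (𝓝 0) (𝓝 (f x)) := by
  have hpoint (z y : M) : Tendsto (fun t => ∫ φ : FF M,
      (dist (φ.1 y) z - dist y z) ^ 2 ∂Q t) (𝓝 0) (𝓝 0) := by
    rw [Metric.tendsto_nhds]
    intro ε hε
    obtain ⟨δ, hδ, hsmall⟩ := hQ ⟨(dist · z), by fun_prop⟩ ε hε
    filter_upwards [Iio_mem_nhds hδ] with t ht
    rw [Real.dist_0_eq_abs, abs_of_nonneg (integral_nonneg fun _ => sq_nonneg _)]
    exact hsmall t ht y
  have := tendsto_integral_sub_of_tendsto_integral_sq_dist_sub (μ := Q)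
    (fun _ => FF.measurable_eval_pi x) (fun _ => measurable_const)
    (fun i z => hpoint z (x i)) hf
  simp only [integral_const, probReal_univ, one_smul] at this
  exact tendsto_sub_nhds_zero_iff.1 this

lemma integral_map_comp_prod {ι : Type*} [Fintype ι] {μ ν : Measure (FF M)} [IsFiniteMeasure μ]
    [IsFiniteMeasure ν] {J : FF M → FF M}
    (hJ : Measurable fun p : M × FF M => (J p.2).1 p.1) (hJμ : ∀ x, ∀ᵐ φ ∂μ, (J φ).1 x = φ.1 x)
    {g : (ι → M) → ℝ} (hg : Continuous g) (x : ι → M) :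
    ∫ ω, g (fun i => ω.1 (x i)) ∂(μ.prod ν).map (fun p => FF.comp (J p.1) p.2)
      = ∫ ψ, ∫ φ, g (fun i => φ.1 (ψ.1 (x i))) ∂μ ∂ν := by
  have hint : Integrable (fun p : FF M × FF M => g fun i => (J p.1).1 (p.2.1 (x i)))
      (μ.prod ν) :=
    hg.integrable_comp_of_compactSpace <| measurable_pi_lambda _ fun i =>
      hJ.comp (((FF.measurable_eval (x i)).comp measurable_snd).prodMk measurable_fst)
  rw [integral_map (f := fun ω : FF M => g fun i => ω.1 (x i))
    (FF.measurable_comp_left hJ).aemeasurable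
    (hg.measurable.comp (FF.measurable_eval_pi x)).aestronglyMeasurable]
  refine (integral_prod_symm _ hint).trans
    (integral_congr_ae (.of_forall fun ψ => integral_congr_ae ?_))
  filter_upwards [ae_all_iff.2 fun i => hJμ (ψ.1 (x i))] with φ hφ
  simp only [hφ]

end CompactMetric

theorem stmt2_general {M : Type*} [MetricSpace M] [CompactSpace M]
    [MeasurableSpace M] [BorelSpace M]
    (Q : ℝ≥0 → Measure (FF M)) (hQprob : ∀ t, IsProbabilityMeasure (Q t))
    (J : ℝ≥0 → FF M → FF M)
    (hJjoint : ∀ s, Measurable fun p : M × FF M => (J s p.2).1 p.1)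
    (hJpres : ∀ s, ∀ x : M, ∀ᵐ φ ∂Q s, (J s φ).1 x = φ.1 x)
    (hconv : ∀ s t : ℝ≥0,
      Q (s + t) = Measure.map (fun p : FF M × FF M => FF.comp (J s p.1) p.2)
        ((Q s).prod (Q t)))
    (hFeller₁ : ∀ f : C(M, ℝ), ∀ ε > (0 : ℝ), ∃ δ > (0 : ℝ≥0), ∀ t < δ, ∀ x : M,
      ∫ φ : FF M, (f (φ.1 x) - f x) ^ 2 ∂ Q t < ε)
    (hFeller₂ : ∀ (f : C(M, ℝ)) (t : ℝ≥0), ∀ ε > (0 : ℝ), ∃ δ > (0 : ℝ), ∀ x y : M,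
      dist x y < δ → ∫ φ : FF M, (f (φ.1 x) - f (φ.1 y)) ^ 2 ∂ Q t < ε) :
    -- Markovian
    (∀ (n : ℕ) (t : ℝ≥0) (f : (Fin n → M) → ℝ) (x : Fin n → M),
      (∀ y, 0 ≤ f y) → 0 ≤ Pn Q n t f x) ∧
    (∀ (n : ℕ) (t : ℝ≥0) (x : Fin n → M), Pn Q n t (fun _ => 1) x = 1) ∧
    -- Feller: continuity in space
    (∀ (n : ℕ) (t : ℝ≥0) (f : (Fin n → M) → ℝ), Continuous f →
      Continuous fun x => Pn Q n t f x) ∧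
    -- Feller: strong continuity at t = 0
    (∀ (n : ℕ) (f : (Fin n → M) → ℝ), Continuous f → ∀ x,
      Tendsto (fun t : ℝ≥0 => Pn Q n t f x) (nhds 0) (nhds (f x))) ∧
    -- semigroup property
    (∀ (n : ℕ) (s t : ℝ≥0) (f : (Fin n → M) → ℝ), Continuous f → ∀ x,
      Pn Q n (s + t) f x = Pn Q n s (fun y => Pn Q n t f y) x) ∧
    -- compatibility
    (∀ (k n : ℕ) (ι : Fin k → Fin n) (t : ℝ≥0) (f : (Fin k → M) → ℝ) (x : Fin n → M),
      Pn Q n t (fun y => f (y ∘ ι)) x = Pn Q k t f (x ∘ ι)) ∧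
    -- the identity P_t^{(2)}(f ⊗ f)(x,x) = P_t(f²)(x)
    (∀ (f : C(M, ℝ)) (t : ℝ≥0) (x : M),
      Pn Q 2 t (fun y => f (y 0) * f (y 1)) ![x, x]
        = Pn Q 1 t (fun y => f (y 0) ^ 2) (fun _ => x)) := by
  refine ⟨fun n t f x hf => integral_nonneg fun φ => hf _, fun n t x => by simp [Pn],
    fun n t f hf => continuous_Pn (fun g => hFeller₂ g t) hf,
    fun n f hf x => tendsto_Pn_nhds_zero hFeller₁ hf x, ?_, fun _ _ _ _ _ _ => rfl,
    fun f t x => integral_congr_ae (.of_forall fun φ => (sq _).symm)⟩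
  intro n s t f hf x
  rw [Pn, add_comm s t, hconv t s, integral_map_comp_prod (hJjoint t) (hJpres t) hf]
  rfl

/-- If `(Q_t)` is a Feller convolution semigroup on the space `(F,𝓕)` of measurable
self-maps of a compact metric space `M`, then the operators
`P_t^{(n)} f(x) = ∫ f ∘ φ^{⊗n}(x) Q_t(dφ)` form a compatible family of Feller semigroups
(Markovian, mapping continuous functions to continuous functions, strongly continuous at
`t = 0`, with the semigroup and compatibility properties), and they satisfy
`P_t^{(2)} (f ⊗ f)(x,x) = P_t (f²)(x)`. -/
theorem stmt2 {M : Type*} [MetricSpace M] [CompactSpace M]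
    [MeasurableSpace M] [BorelSpace M]
    (Q : ℝ≥0 → Measure (FF M)) (hQprob : ∀ t, IsProbabilityMeasure (Q t))
    (J : ℝ≥0 → FF M → FF M)
    (hJmeas : ∀ s, Measurable (J s))
    (hJjoint : ∀ s, Measurable fun p : M × FF M => (J s p.2).1 p.1)
    (hJpres : ∀ s, ∀ x : M, ∀ᵐ φ ∂Q s, (J s φ).1 x = φ.1 x)
    (hconv : ∀ s t : ℝ≥0,
      Q (s + t) = Measure.map (fun p : FF M × FF M => FF.comp (J s p.1) p.2)
        ((Q s).prod (Q t)))
    (hFeller₁ : ∀ f : C(M, ℝ), ∀ ε > (0 : ℝ), ∃ δ > (0 : ℝ≥0), ∀ t < δ, ∀ x : M,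
      ∫ φ : FF M, (f (φ.1 x) - f x) ^ 2 ∂ Q t < ε)
    (hFeller₂ : ∀ (f : C(M, ℝ)) (t : ℝ≥0), ∀ ε > (0 : ℝ), ∃ δ > (0 : ℝ), ∀ x y : M,
      dist x y < δ → ∫ φ : FF M, (f (φ.1 x) - f (φ.1 y)) ^ 2 ∂ Q t < ε) :
    -- Markovian
    (∀ (n : ℕ) (t : ℝ≥0) (f : (Fin n → M) → ℝ) (x : Fin n → M),
      (∀ y, 0 ≤ f y) → 0 ≤ Pn Q n t f x) ∧
    (∀ (n : ℕ) (t : ℝ≥0) (x : Fin n → M), Pn Q n t (fun _ => 1) x = 1) ∧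
    -- Feller: continuity in space
    (∀ (n : ℕ) (t : ℝ≥0) (f : (Fin n → M) → ℝ), Continuous f →
      Continuous fun x => Pn Q n t f x) ∧
    -- Feller: strong continuity at t = 0
    (∀ (n : ℕ) (f : (Fin n → M) → ℝ), Continuous f → ∀ x,
      Tendsto (fun t : ℝ≥0 => Pn Q n t f x) (nhds 0) (nhds (f x))) ∧
    -- semigroup property
    (∀ (n : ℕ) (s t : ℝ≥0) (f : (Fin n → M) → ℝ), Continuous f → ∀ x,
      Pn Q n (s + t) f x = Pn Q n s (fun y => Pn Q n t f y) x) ∧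
    -- compatibility
    (∀ (k n : ℕ) (ι : Fin k → Fin n) (t : ℝ≥0) (f : (Fin k → M) → ℝ) (x : Fin n → M),
      Pn Q n t (fun y => f (y ∘ ι)) x = Pn Q k t f (x ∘ ι)) ∧
    -- the identity P_t^{(2)}(f ⊗ f)(x,x) = P_t(f²)(x)
    (∀ (f : C(M, ℝ)) (t : ℝ≥0) (x : M),
      Pn Q 2 t (fun y => f (y 0) * f (y 1)) ![x, x]
        = Pn Q 1 t (fun y => f (y 0) ^ 2) (fun _ => x)) :=
  stmt2_general Q hQprob J hJjoint hJpres hconv hFeller₁ hFeller₂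
end

section
/- Let (P_t^{(n)})_{n≥1} be a compatible family of Feller semigroups on a compact metric space M satisfying P_t^{(2)}(f⊗f)(x,x) = P_t^{(1)}(f²)(x) for all f ∈ C(M). Let (X_t,Y_t) denote the two-point motion with law P^{(2)}_{(x,y)}. Then for every T > 0 there exists a function ε_T : ℝ₊ → ℝ₊ with ε_T(r) → 0 as r → 0 such that sup_{t ∈ [0,T]} E^{(2)}_{(x,y)}[ d(X_t,Y_t)² ] ≤ ε_T(d(x,y)) for all x,y ∈ M. -/
open MeasureTheory ProbabilityTheory Filter Topology
open scoped NNReal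

/-!
The mean squared distance `F t (x, y) = E_{(x,y)}[d(X_t, Y_t)²]` is jointly continuous in
`(t, x, y)` by the Feller property and vanishes on the diagonal because the two-point motion
started on the diagonal stays there. On the compact set `[0, T] × M × M` it is therefore
uniformly continuous, hence uniformly small near `[0, T] × diagonal`, and the modulus
`ε_T(r) = sup {F t (x, y) | t ≤ T, d(x, y) ≤ r}` does the job.
-/

theorem exists_modulus_of_forall_lt {ι : Type*} (S : Set ι) (g d : ι → ℝ)
    (hg : ∀ i ∈ S, 0 ≤ g i) (hbdd : BddAbove (g '' S))
    (hsmall : ∀ δ > 0, ∃ r > 0, ∀ i ∈ S, d i < r → g i < δ) :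
    ∃ ε : ℝ → ℝ, Tendsto ε (𝓝[≥] 0) (𝓝 0) ∧ ∀ i ∈ S, g i ≤ ε (d i) := by
  refine ⟨fun r => sSup (g '' {i ∈ S | d i ≤ r}), ?_, fun i hi => ?_⟩
  · rw [Metric.tendsto_nhdsWithin_nhds]
    intro δ hδ
    obtain ⟨r₀, hr₀, hr₀small⟩ := hsmall (δ / 2) (half_pos hδ)
    refine ⟨r₀, hr₀, fun r (hr : 0 ≤ r) hrr₀ => ?_⟩
    rw [Real.dist_0_eq_abs, abs_of_nonneg hr] at hrr₀
    have hsup_le : sSup (g '' {i ∈ S | d i ≤ r}) ≤ δ / 2 := by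
      refine Real.sSup_le ?_ (half_pos hδ).le
      rintro _ ⟨i, ⟨hi, hdi⟩, rfl⟩
      exact (hr₀small i hi (hdi.trans_lt hrr₀)).le
    have hsup_nonneg : 0 ≤ sSup (g '' {i ∈ S | d i ≤ r}) := by
      refine Real.sSup_nonneg ?_
      rintro _ ⟨i, ⟨hi, -⟩, rfl⟩
      exact hg i hi
    rw [Real.dist_0_eq_abs, abs_of_nonneg hsup_nonneg]
    linarith
  · exact le_csSup (hbdd.mono (Set.image_mono fun j hj => hj.1)) ⟨i, ⟨hi, le_rfl⟩, rfl⟩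

section DiagonalModulus

variable {α M : Type*} [PseudoMetricSpace α] [PseudoMetricSpace M] [CompactSpace M]
  {s : Set α} {F : α × (M × M) → ℝ}

theorem IsCompact.exists_pos_forall_dist_lt_imp_lt (hs : IsCompact s) (hF : Continuous F)
    (hdiag : ∀ a ∈ s, ∀ x, F (a, (x, x)) = 0) :
    ∀ δ > 0, ∃ r > 0, ∀ q ∈ s ×ˢ Set.univ, dist q.2.1 q.2.2 < r → F q < δ := by
  intro δ hδ
  have hunif := (hs.prod isCompact_univ).uniformContinuousOn_of_continuous hF.continuousOn
  obtain ⟨r, hr, hrδ⟩ := Metric.uniformContinuousOn_iff.mp hunif δ hδ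
  refine ⟨r, hr, fun ⟨a, x, y⟩ hq hxy => ?_⟩
  have hclose : dist (a, (x, y)) (a, (x, x)) < r := by
    simpa [Prod.dist_eq, dist_comm y x] using hxy
  have := hrδ _ hq (a, (x, x)) ⟨hq.1, trivial⟩ hclose
  rw [hdiag a hq.1 x, Real.dist_0_eq_abs] at this
  exact (le_abs_self _).trans_lt this

theorem IsCompact.exists_modulus_of_eq_zero_on_diag (hs : IsCompact s) (hF : Continuous F)
    (hF0 : ∀ q, 0 ≤ F q) (hdiag : ∀ a ∈ s, ∀ x, F (a, (x, x)) = 0) :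
    ∃ ε : ℝ → ℝ, Tendsto ε (𝓝[≥] 0) (𝓝 0) ∧
      ∀ a ∈ s, ∀ x y : M, F (a, (x, y)) ≤ ε (dist x y) := by
  obtain ⟨ε, hε, hFε⟩ := exists_modulus_of_forall_lt (s ×ˢ Set.univ) F
    (fun q => dist q.2.1 q.2.2) (fun q _ => hF0 q)
    ((hs.prod isCompact_univ).bddAbove_image hF.continuousOn)
    (hs.exists_pos_forall_dist_lt_imp_lt hF hdiag)
  exact ⟨ε, hε, fun a ha x y => hFε (a, (x, y)) ⟨ha, trivial⟩⟩

end DiagonalModulus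

theorem integral_dist_sq_eq_zero_of_ae_eq {M : Type*} [PseudoMetricSpace M]
    [MeasurableSpace M] {μ : Measure (M × M)} (h : ∀ᵐ p ∂μ, p.1 = p.2) :
    ∫ p, dist p.1 p.2 ^ 2 ∂μ = 0 :=
  integral_eq_zero_of_ae (h.mono fun p hp => by simp [hp])

theorem stmt3_general {M : Type*} [MetricSpace M] [CompactSpace M]
    [MeasurableSpace M]
    (κ : ℝ≥0 → Kernel (M × M) (M × M))
    (hcont : ∀ h : M × M → ℝ, Continuous h →
      Continuous fun q : ℝ≥0 × (M × M) => ∫ p, h p ∂ (κ q.1) q.2)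
    (hdiag : ∀ (t : ℝ≥0) (x : M), ∀ᵐ p ∂ (κ t) (x, x), p.1 = p.2) :
    ∀ T : ℝ≥0, 0 < T → ∃ ε : ℝ → ℝ,
      Tendsto ε (nhdsWithin 0 (Set.Ici 0)) (nhds 0) ∧
      ∀ t : ℝ≥0, t ≤ T → ∀ x y : M,
        ∫ p, (dist p.1 p.2) ^ 2 ∂ (κ t) (x, y) ≤ ε (dist x y) := by
  intro T _
  have hdist_sq : Continuous fun p : M × M => dist p.1 p.2 ^ 2 :=
    (continuous_fst.dist continuous_snd).pow 2
  obtain ⟨ε, hε, hbound⟩ := (isCompact_Icc (a := 0) (b := T)).exists_modulus_of_eq_zero_on_diag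
    (hcont _ hdist_sq) (fun _ => integral_nonneg fun _ => sq_nonneg _)
    (fun t _ x => integral_dist_sq_eq_zero_of_ae_eq (hdiag t x))
  exact ⟨ε, hε, fun t ht => hbound t ⟨zero_le, ht⟩⟩

/-- Lemma 1.4: for the two-point motion of a compatible Feller family satisfying
`P_t^{(2)}(f⊗f)(x,x) = P_t(f²)(x)` (encoded by the diagonal-preservation property of the
two-point transition kernel `κ`, together with joint Feller continuity), for every `T > 0`
there is a modulus `ε_T` with `ε_T(r) → 0` as `r → 0` such that
`sup_{t ∈ [0,T]} E_{(x,y)}[d(X_t,Y_t)²] ≤ ε_T(d(x,y))` for all `x, y`. -/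
theorem stmt3 {M : Type*} [MetricSpace M] [CompactSpace M]
    [MeasurableSpace M] [BorelSpace M]
    (κ : ℝ≥0 → Kernel (M × M) (M × M))
    [hm : ∀ t, IsMarkovKernel (κ t)]
    (hsemi : ∀ s t : ℝ≥0, ∀ p : M × M, ((κ s) p).bind (κ t) = (κ (s + t)) p)
    (hcont : ∀ h : M × M → ℝ, Continuous h →
      Continuous fun q : ℝ≥0 × (M × M) => ∫ p, h p ∂ (κ q.1) q.2)
    (hdiag : ∀ (t : ℝ≥0) (x : M), ∀ᵐ p ∂ (κ t) (x, x), p.1 = p.2) :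
    ∀ T : ℝ≥0, 0 < T → ∃ ε : ℝ → ℝ,
      Tendsto ε (nhdsWithin 0 (Set.Ici 0)) (nhds 0) ∧
      ∀ t : ℝ≥0, t ≤ T → ∀ x y : M,
        ∫ p, (dist p.1 p.2) ^ 2 ∂ (κ t) (x, y) ≤ ε (dist x y) :=
  stmt3_general κ hcont hdiag
end

section
/- The domination relation on Feller convolution semigroups is antisymmetric: if ν¹ dominates ν² and ν² dominates ν¹, then ν¹ = ν². Key step: if ν¹ dominates ν² then, by Jensen's inequality applied to conditional expectations, for all f₁,…,fₙ ∈ C(M), x₁,…,xₙ ∈ M and t ≥ 0, E_{ν¹}[exp(Σᵢ K_{0,t}fᵢ(xᵢ))] ≥ E_{ν²}[exp(Σᵢ K_{0,t}fᵢ(xᵢ))]; mutual domination forces equality of these exponential moments and hence equality of the semigroups. -/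
/-!
Filtering by a subnoise replaces a one-point moment `g = ∫ f dK_{0,t}(x)` by its conditional
expectation, whose second moment is smaller, and strictly so unless `E[g | 𝒢] = g` a.s.
Mutual domination gives `E₁[g₁²] = E₂[E[g₂ | 𝒢₂]²] ≤ E₂[g₂²] = E₁[E[g₁ | 𝒢₁]²]`, so filtering
does not change `g₁`, hence does not change any moment of `K₁`.

Nothing forces `ω ↦ g(ω)` to be measurable. If it is not integrable, its conditional expectation
is `0`; the one-point moment of `f + ‖f‖ + 1`, which is at least `1`, then shows that the
corresponding function of the other flow is not integrable either, and both sides of every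
moment identity involving `g` vanish.
-/

open MeasureTheory ProbabilityTheory
open scoped NNReal

section ConditionalExpectationL2

variable {Ω : Type*} {m m₀ : MeasurableSpace Ω} {μ : Measure[m₀] Ω} {X : Ω → ℝ}

theorem integrable_of_integral_condExp_ne_zero (h : ∫ ω, μ[X|m] ω ∂μ ≠ 0) : Integrable X μ := by
  by_contra hX
  simp [condExp_of_not_integrable hX] at h

variable [IsFiniteMeasure μ]

theorem integral_sq_sub_condExp (hm : m ≤ m₀) (hX : MemLp X 2 μ) :
    ∫ ω, (X ω - μ[X|m] ω) ^ 2 ∂μ = ∫ ω, X ω ^ 2 ∂μ - ∫ ω, (μ[X|m] ω) ^ 2 ∂μ :=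
  calc ∫ ω, (X ω - μ[X|m] ω) ^ 2 ∂μ = ∫ ω, Var[X; μ | m] ω ∂μ := (integral_condExp hm).symm
    _ = ∫ ω, (μ[X ^ 2|m] - μ[X|m] ^ 2 : Ω → ℝ) ω ∂μ :=
      integral_congr_ae (condVar_ae_eq_condExp_sq_sub_sq_condExp hm hX)
    _ = ∫ ω, X ω ^ 2 ∂μ - ∫ ω, (μ[X|m] ω) ^ 2 ∂μ := by
      simp only [Pi.sub_apply, Pi.pow_apply]
      rw [integral_sub integrable_condExp (hX.condExp one_le_two).integrable_sq,
        integral_condExp hm]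
      rfl

theorem integral_sq_condExp_le (hm : m ≤ m₀) (hX : MemLp X 2 μ) :
    ∫ ω, (μ[X|m] ω) ^ 2 ∂μ ≤ ∫ ω, X ω ^ 2 ∂μ := by
  have := integral_sq_sub_condExp hm hX
  have : 0 ≤ ∫ ω, (X ω - μ[X|m] ω) ^ 2 ∂μ := integral_nonneg fun ω => sq_nonneg _
  linarith

theorem condExp_ae_eq_self_of_integral_sq_le (hm : m ≤ m₀) (hX : MemLp X 2 μ)
    (h : ∫ ω, X ω ^ 2 ∂μ ≤ ∫ ω, (μ[X|m] ω) ^ 2 ∂μ) : μ[X|m] =ᵐ[μ] X := by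
  have hzero : ∫ ω, (X ω - μ[X|m] ω) ^ 2 ∂μ = 0 := by
    have := integral_sq_sub_condExp hm hX
    have : 0 ≤ ∫ ω, (X ω - μ[X|m] ω) ^ 2 ∂μ := integral_nonneg fun ω => sq_nonneg _
    linarith
  have hsq := (integral_eq_zero_iff_of_nonneg (fun ω => sq_nonneg _)
    (hX.sub (hX.condExp one_le_two)).integrable_sq).1 hzero
  filter_upwards [hsq] with ω hω
  exact (sub_eq_zero.1 (pow_eq_zero_iff two_ne_zero |>.1 hω)).symm

end ConditionalExpectationL2

theorem integral_prod_condExp_eq_zero_of_not_integrable {Ω ι : Type*} {m m₀ : MeasurableSpace Ω}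
    {μ : Measure[m₀] Ω} [Fintype ι] {X : ι → Ω → ℝ} {i : ι} (hi : ¬Integrable (X i) μ) :
    ∫ ω, ∏ j, μ[X j|m] ω ∂μ = 0 := by
  have hzero : ∀ ω, ∏ j, μ[X j|m] ω = 0 := fun ω =>
    Finset.prod_eq_zero (Finset.mem_univ i) (by rw [condExp_of_not_integrable hi]; rfl)
  simp [hzero]

section Kernels

variable {M : Type*} [TopologicalSpace M] [MeasurableSpace M]
  {Ω Ω' : Type*} {m : MeasurableSpace Ω} {m' : MeasurableSpace Ω'}
  [mΩ : MeasurableSpace Ω] [mΩ' : MeasurableSpace Ω']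

def Dominates (P : Measure Ω) (K : M → Ω → Measure M) (𝒢 : MeasurableSpace Ω)
    (P' : Measure Ω') (K' : M → Ω' → Measure M) : Prop :=
  ∀ (n : ℕ) (f : Fin n → C(M, ℝ)) (x : Fin n → M),
    ∫ ω, ∏ i, (P[fun ω' => ∫ y, f i y ∂K (x i) ω' | 𝒢]) ω ∂P
      = ∫ ω, ∏ i, ∫ y, f i y ∂K' (x i) ω ∂P'

namespace Dominates

variable {P : Measure Ω} {K : M → Ω → Measure M} {P' : Measure Ω'} {K' : M → Ω' → Measure M}

theorem integral_condExp_eq (h : Dominates P K m P' K') (f : C(M, ℝ)) (z : M) :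
    ∫ ω, (P[fun ω' => ∫ y, f y ∂K z ω' | m]) ω ∂P = ∫ ω, ∫ y, f y ∂K' z ω ∂P' := by
  simpa using h 1 ![f] ![z]

theorem integral_sq_condExp_eq (h : Dominates P K m P' K') (f : C(M, ℝ)) (z : M) :
    ∫ ω, ((P[fun ω' => ∫ y, f y ∂K z ω' | m]) ω) ^ 2 ∂P
      = ∫ ω, (∫ y, f y ∂K' z ω) ^ 2 ∂P' := by
  simpa [Fin.prod_univ_two, sq] using h 2 ![f, f] ![z, z]

end Dominates

variable [CompactSpace M]

theorem abs_integral_continuousMap_le (f : C(M, ℝ)) (κ : Measure M) [IsProbabilityMeasure κ] :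
    |∫ y, f y ∂κ| ≤ ‖f‖ := by
  simpa using norm_integral_le_of_norm_le_const (μ := κ) (ae_of_all _ f.norm_coe_le_norm)

theorem memLp_integral_continuousMap {P : Measure Ω} [IsFiniteMeasure P] {K : Ω → Measure M}
    (hK : ∀ ω, IsProbabilityMeasure (K ω)) {f : C(M, ℝ)}
    (hint : Integrable (fun ω => ∫ y, f y ∂K ω) P) (p : ENNReal) :
    MemLp (fun ω => ∫ y, f y ∂K ω) p P :=
  .of_bound hint.aestronglyMeasurable ‖f‖
    (ae_of_all _ fun ω => by have := hK ω; exact abs_integral_continuousMap_le f (K ω))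

variable [OpensMeasurableSpace M]

theorem integral_continuousMap_add_const (f : C(M, ℝ)) (c : ℝ) (κ : Measure M)
    [IsProbabilityMeasure κ] :
    ∫ y, (f + ContinuousMap.const M c) y ∂κ = ∫ y, f y ∂κ + c := by
  have hf : Integrable f κ :=
    .of_bound f.continuous.aestronglyMeasurable ‖f‖ (ae_of_all _ f.norm_coe_le_norm)
  simp [integral_add hf (integrable_const c)]

namespace Dominates

variable {P : Measure Ω} {K : M → Ω → Measure M} {P' : Measure Ω'} {K' : M → Ω' → Measure M}

theorem integrable_of_integrable [IsFiniteMeasure P] [IsProbabilityMeasure P']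
    (h : Dominates P K m P' K') (hK : ∀ z ω, IsProbabilityMeasure (K z ω))
    (hK' : ∀ z ω, IsProbabilityMeasure (K' z ω)) (f : C(M, ℝ)) (z : M)
    (hint' : Integrable (fun ω => ∫ y, f y ∂K' z ω) P') :
    Integrable (fun ω => ∫ y, f y ∂K z ω) P := by
  let g := f + ContinuousMap.const M (‖f‖ + 1)
  have hshift (κ : Measure M) [IsProbabilityMeasure κ] :
      ∫ y, g y ∂κ = ∫ y, f y ∂κ + (‖f‖ + 1) :=
    integral_continuousMap_add_const f _ κ
  have hpos (ω : Ω') : 1 ≤ ∫ y, g y ∂K' z ω := by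
    have := hK' z ω
    linarith [hshift (K' z ω), abs_le.1 (abs_integral_continuousMap_le f (K' z ω))]
  have hintg' : Integrable (fun ω => ∫ y, g y ∂K' z ω) P' :=
    (hint'.add (integrable_const _)).congr
      (ae_of_all _ fun ω => by have := hK' z ω; exact (hshift _).symm)
  have hintg : Integrable (fun ω => ∫ y, g y ∂K z ω) P := by
    refine integrable_of_integral_condExp_ne_zero (m := m) ?_
    rw [h.integral_condExp_eq]
    have := integral_mono (integrable_const 1) hintg' hpos
    simp only [integral_const, probReal_univ, smul_eq_mul, one_mul] at this
    linarith
  exact (hintg.sub (integrable_const (‖f‖ + 1))).congr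
    (ae_of_all _ fun ω => by have := hK z ω; simp [hshift])

theorem condExp_ae_eq_self [IsProbabilityMeasure P] [IsProbabilityMeasure P']
    (h : Dominates P K m P' K') (h' : Dominates P' K' m' P K) (hm : m ≤ mΩ) (hm' : m' ≤ mΩ')
    (hK : ∀ z ω, IsProbabilityMeasure (K z ω)) (hK' : ∀ z ω, IsProbabilityMeasure (K' z ω))
    (f : C(M, ℝ)) (z : M) (hint : Integrable (fun ω => ∫ y, f y ∂K z ω) P) :
    P[fun ω => ∫ y, f y ∂K z ω | m] =ᵐ[P] fun ω => ∫ y, f y ∂K z ω := by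
  have hg := memLp_integral_continuousMap (hK z) hint 2
  have hg' := memLp_integral_continuousMap (hK' z) (h'.integrable_of_integrable hK' hK f z hint) 2
  refine condExp_ae_eq_self_of_integral_sq_le hm hg ?_
  calc ∫ ω, (∫ y, f y ∂K z ω) ^ 2 ∂P
      = ∫ ω, ((P'[fun ω' => ∫ y, f y ∂K' z ω' | m']) ω) ^ 2 ∂P' :=
        (h'.integral_sq_condExp_eq f z).symm
    _ ≤ ∫ ω, (∫ y, f y ∂K' z ω) ^ 2 ∂P' := integral_sq_condExp_le hm' hg'
    _ = ∫ ω, ((P[fun ω' => ∫ y, f y ∂K z ω' | m]) ω) ^ 2 ∂P :=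
        (h.integral_sq_condExp_eq f z).symm

end Dominates

end Kernels

/-- Antisymmetry of the domination relation on (laws of) stochastic flows of kernels: if
the flow `K₂` has the law of a flow obtained by filtering `K₁` with respect to a subnoise
(i.e. its finite-dimensional moments are those of the conditional expectations of `K₁`
given sub-σ-fields `𝒢₁ t`), and symmetrically `K₁` has the law of a filtering of `K₂`,
then the two flows have the same law, i.e. the same finite-dimensional moments (which
determine the convolution semigroups `ν¹ = ν²`). -/
theorem stmt10 {M : Type*} [MetricSpace M] [CompactSpace M]
    [MeasurableSpace M] [BorelSpace M]
    {Ω₁ Ω₂ : Type*} [MeasurableSpace Ω₁] [MeasurableSpace Ω₂]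
    (P₁ : Measure Ω₁) (P₂ : Measure Ω₂)
    [IsProbabilityMeasure P₁] [IsProbabilityMeasure P₂]
    (K₁ : ℝ≥0 → M → Ω₁ → Measure M) (K₂ : ℝ≥0 → M → Ω₂ → Measure M)
    (h₁ : ∀ t x ω, IsProbabilityMeasure (K₁ t x ω))
    (h₂ : ∀ t x ω, IsProbabilityMeasure (K₂ t x ω))
    (𝒢₁ : ℝ≥0 → MeasurableSpace Ω₁) (𝒢₂ : ℝ≥0 → MeasurableSpace Ω₂)
    (h𝒢₁ : ∀ t, 𝒢₁ t ≤ ‹MeasurableSpace Ω₁›)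
    (h𝒢₂ : ∀ t, 𝒢₂ t ≤ ‹MeasurableSpace Ω₂›)
    (hdom12 : ∀ (n : ℕ) (t : ℝ≥0) (f : Fin n → C(M, ℝ)) (x : Fin n → M),
      ∫ ω, ∏ i, (P₁[fun ω' => ∫ y, f i y ∂ K₁ t (x i) ω' | 𝒢₁ t]) ω ∂P₁
        = ∫ ω, ∏ i, ∫ y, f i y ∂ K₂ t (x i) ω ∂P₂)
    (hdom21 : ∀ (n : ℕ) (t : ℝ≥0) (f : Fin n → C(M, ℝ)) (x : Fin n → M),
      ∫ ω, ∏ i, (P₂[fun ω' => ∫ y, f i y ∂ K₂ t (x i) ω' | 𝒢₂ t]) ω ∂P₂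
        = ∫ ω, ∏ i, ∫ y, f i y ∂ K₁ t (x i) ω ∂P₁) :
    ∀ (n : ℕ) (t : ℝ≥0) (f : Fin n → C(M, ℝ)) (x : Fin n → M),
      ∫ ω, ∏ i, ∫ y, f i y ∂ K₁ t (x i) ω ∂P₁
        = ∫ ω, ∏ i, ∫ y, f i y ∂ K₂ t (x i) ω ∂P₂ := by
  intro n t f x
  have d₁₂ : Dominates P₁ (K₁ t) (𝒢₁ t) P₂ (K₂ t) := fun n => hdom12 n t
  have d₂₁ : Dominates P₂ (K₂ t) (𝒢₂ t) P₁ (K₁ t) := fun n => hdom21 n t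
  by_cases hint : ∀ i, Integrable (fun ω => ∫ y, f i y ∂K₁ t (x i) ω) P₁
  · have hae : ∀ᵐ ω ∂P₁, ∀ i, (P₁[fun ω' => ∫ y, f i y ∂K₁ t (x i) ω' | 𝒢₁ t]) ω
        = ∫ y, f i y ∂K₁ t (x i) ω := ae_all_iff.2 fun i =>
      d₁₂.condExp_ae_eq_self d₂₁ (h𝒢₁ t) (h𝒢₂ t) (h₁ t) (h₂ t) (f i) (x i) (hint i)
    rw [← hdom12 n t f x]
    refine integral_congr_ae ?_
    filter_upwards [hae] with ω hω
    exact Finset.prod_congr rfl fun i _ => (hω i).symm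
  · obtain ⟨i, hi⟩ := not_forall.1 hint
    have hi' : ¬Integrable (fun ω => ∫ y, f i y ∂K₂ t (x i) ω) P₂ := fun hi' =>
      hi (d₁₂.integrable_of_integrable (h₁ t) (h₂ t) (f i) (x i) hi')
    rw [← hdom12 n t f x, ← hdom21 n t f x,
      integral_prod_condExp_eq_zero_of_not_integrable hi',
      integral_prod_condExp_eq_zero_of_not_integrable hi]
end

section
/- Let φ = (φ_{s,t})_{s≤t} be a measurable stochastic coalescing flow on a locally compact separable metric space M whose two-point motion (X_t,Y_t) satisfies: for every x and t > 0, P^{(2)}_{(x,y)}[X_t ≠ Y_t] → 0 as y → x. Fix s < t, x ∈ M, a Radon measure λ, and let m_ε^x = λ({y ∈ B(x,ε) : φ_{s,t}(y) = φ_{s,t}(x)}). Choose ε_n^x > 0 so that d(x,y) ≤ ε_n^x implies P^{(2)}_{(x,y)}[X_{t−s} ≠ Y_{t−s}] ≤ 2^{-n}. Then: (i) for every α ∈ (0,1), P[m_{ε_n^x}^x < (1−α) λ(B(x,ε_n^x))] ≤ 1/(α 2ⁿ); (ii) almost surely m_{ε_n^x}^x / λ(B(x,ε_n^x)) → 1 as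 n → ∞; consequently for every x, λ-a.e. x and a.s., the image measure μ_{s,t} = (φ_{s,t})_* λ has an atom at φ_{s,t}(x), so μ_{s,t} is purely atomic a.s. -/
/-!
Fubini bounds the expected `λ`-mass of the points of a set `s` that have not coalesced with
`z` by `δ λ(s)`, where `δ` bounds `P[φ y ≠ φ z]` on `s`; since the coalesced and the
non-coalesced parts of `s` add up to `λ(s)`, Markov's inequality gives (i), and summing the
bounds `2⁻ⁿ/α` over `n`, Borel–Cantelli gives (ii). For (iii), every point `z` of the support
of `λ` has balls of positive finite mass on which `δ` is arbitrarily small, so almost surely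
the fibre of `φ` through `z` has positive `λ`-mass. Fubini again exchanges "for `λ`-a.e. `z`"
with "almost surely", and the fibre mass `λ {w | φ w = φ z}` is the mass of `φ_* λ` at `φ z`.
-/

open MeasureTheory Filter Topology Metric
open scoped ENNReal

theorem tendsto_of_le_of_forall_eventually_sub_le {ι : Type*} {l : Filter ι} {r : ι → ℝ}
    {c : ℝ} {α : ℕ → ℝ} (hα : Tendsto α atTop (𝓝 0)) (hrc : ∀ i, r i ≤ c)
    (h : ∀ k, ∀ᶠ i in l, c - α k ≤ r i) : Tendsto r l (𝓝 c) := by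
  refine tendsto_order.2 ⟨fun a ha => ?_, fun a ha => .of_forall fun i => (hrc i).trans_lt ha⟩
  obtain ⟨k, hk⟩ := (hα.eventually (gt_mem_nhds (sub_pos.2 ha))).exists
  exact (h k).mono fun i hi => by linarith

theorem ENNReal.le_toReal_div_of_ofReal_mul_le {a : ℝ} {m L : ℝ≥0∞} (ha : 0 ≤ a)
    (hL0 : L ≠ 0) (hLtop : L ≠ ∞) (hm : m ≠ ∞) (h : ENNReal.ofReal a * L ≤ m) :
    a ≤ m.toReal / L.toReal := by
  rw [le_div_iff₀ (ENNReal.toReal_pos hL0 hLtop)]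
  simpa [ENNReal.toReal_mul, ENNReal.toReal_ofReal ha] using ENNReal.toReal_mono hm h

theorem ae_tendsto_toReal_div_of_tsum_ne_top {Ω : Type*} [MeasurableSpace Ω] {P : Measure Ω}
    {m : ℕ → Ω → ℝ≥0∞} {L : ℕ → ℝ≥0∞} (hL0 : ∀ n, L n ≠ 0) (hLtop : ∀ n, L n ≠ ∞)
    (hmL : ∀ n ω, m n ω ≤ L n)
    (hsum : ∀ α : ℝ, 0 < α → α < 1 →
      ∑' n, P {ω | m n ω < ENNReal.ofReal (1 - α) * L n} ≠ ∞) :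
    ∀ᵐ ω ∂P, Tendsto (fun n => (m n ω).toReal / (L n).toReal) atTop (𝓝 1) := by
  set α : ℕ → ℝ := fun k => (1 / 2) ^ (k + 1)
  have hα : Tendsto α atTop (𝓝 0) :=
    (tendsto_pow_atTop_nhds_zero_of_lt_one (by norm_num) (by norm_num)).comp
      (tendsto_add_atTop_nat 1)
  have hae : ∀ᵐ ω ∂P, ∀ k, ∀ᶠ n in atTop,
      ω ∉ {ω | m n ω < ENNReal.ofReal (1 - α k) * L n} :=
    ae_all_iff.2 fun k => ae_eventually_notMem <|
      hsum (α k) (by positivity) (pow_lt_one₀ (by norm_num) (by norm_num) (by omega))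
  filter_upwards [hae] with ω hω
  refine tendsto_of_le_of_forall_eventually_sub_le hα
    (fun n => div_le_one_of_le₀ (ENNReal.toReal_mono (hLtop n) (hmL n ω)) ENNReal.toReal_nonneg)
    fun k => (hω k).mono fun n hn => ?_
  refine ENNReal.le_toReal_div_of_ofReal_mul_le ?_ (hL0 n) (hLtop n)
    (ne_top_of_le_ne_top (hLtop n) (hmL n ω)) (not_lt.1 hn)
  exact sub_nonneg.2 (pow_le_one₀ (by norm_num) (by norm_num))

theorem MeasureTheory.Measure.ae_map_measure_singleton_pos {M N : Type*} [MeasurableSpace M]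
    [MeasurableSpace N] [MeasurableEq N] {μ : Measure M} [SFinite μ] {f : M → N}
    (hf : Measurable f) (h : ∀ᵐ z ∂μ, 0 < μ (f ⁻¹' {f z})) :
    ∀ᵐ y ∂μ.map f, 0 < μ.map f {y} := by
  have hmap : ∀ y, μ.map f {y} = μ ((fun w => (w, y)) ⁻¹' {p : M × N | f p.1 = p.2}) :=
    fun y => Measure.map_apply hf (measurableSet_singleton y)
  have hset : MeasurableSet {y | 0 < μ.map f {y}} := by
    simp only [hmap]
    exact measurableSet_lt measurable_const <| measurable_measure_prodMk_right <|
      measurableSet_eq_fun (hf.comp measurable_fst) measurable_snd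
  rw [ae_map_iff hf.aemeasurable hset]
  filter_upwards [h] with z hz
  rwa [Measure.map_apply hf (measurableSet_singleton _)]

section Coalescence

variable {M Ω : Type*} [MeasurableSpace M] [MeasurableEq M] [MeasurableSpace Ω]
  {P : Measure Ω} [SFinite P] {lam : Measure M} [SFinite lam] {φ : M → Ω → M}

theorem measurableSet_setOf_apply_eq_apply (hφ : Measurable fun p : M × Ω => φ p.1 p.2)
    (z : M) : MeasurableSet {p : M × Ω | φ p.1 p.2 = φ z p.2} :=
  measurableSet_eq_fun hφ (hφ.comp (measurable_const.prodMk measurable_snd))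

theorem lintegral_measure_not_coalesced_le (hφ : Measurable fun p : M × Ω => φ p.1 p.2)
    {s : Set M} (hs : MeasurableSet s) (z : M) {δ : ℝ≥0∞}
    (hδ : ∀ y ∈ s, P {ω | φ y ω ≠ φ z ω} ≤ δ) :
    ∫⁻ ω, lam {y | y ∈ s ∧ φ y ω ≠ φ z ω} ∂P ≤ δ * lam s := by
  have hA : MeasurableSet {p : M × Ω | p.1 ∈ s ∧ φ p.1 p.2 ≠ φ z p.2} :=
    (measurable_fst hs).inter (measurableSet_setOf_apply_eq_apply hφ z).compl
  calc ∫⁻ ω, lam {y | y ∈ s ∧ φ y ω ≠ φ z ω} ∂P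
      = ∫⁻ y, P {ω | y ∈ s ∧ φ y ω ≠ φ z ω} ∂lam :=
        (Measure.prod_apply_symm hA).symm.trans (Measure.prod_apply hA)
    _ ≤ ∫⁻ y, s.indicator (fun _ => δ) y ∂lam := by
        refine lintegral_mono fun y => ?_
        by_cases hy : y ∈ s
        · simpa [hy] using hδ y hy
        · simp [hy]
    _ = δ * lam s := lintegral_indicator_const hs δ

theorem measure_measure_coalesced_lt_le (hφ : Measurable fun p : M × Ω => φ p.1 p.2)
    {s : Set M} (hs : MeasurableSet s) (hsfin : lam s ≠ ∞) (z : M) {δ : ℝ≥0∞}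
    (hδ : ∀ y ∈ s, P {ω | φ y ω ≠ φ z ω} ≤ δ) {α : ℝ≥0∞} (hα0 : α ≠ 0) (hα1 : α ≤ 1) :
    P {ω | lam {y | y ∈ s ∧ φ y ω = φ z ω} < (1 - α) * lam s} ≤ δ / α := by
  rcases eq_or_ne (lam s) 0 with hs0 | hs0
  · simp [hs0]
  have hsub : {ω | lam {y | y ∈ s ∧ φ y ω = φ z ω} < (1 - α) * lam s}
      ⊆ {ω | α * lam s ≤ lam {y | y ∈ s ∧ φ y ω ≠ φ z ω}} := by
    intro ω hω
    rw [Set.mem_ofPred_eq] at hω ⊢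
    by_contra! hne
    have hsplit :
        lam {y | y ∈ s ∧ φ y ω = φ z ω} + lam {y | y ∈ s ∧ φ y ω ≠ φ z ω} = lam s :=
      measure_inter_add_sdiff s <| measurableSet_eq_fun
        (hφ.comp (measurable_id.prodMk measurable_const)) measurable_const
    have hlt := ENNReal.add_lt_add hω hne
    rw [hsplit, ← add_mul, tsub_add_cancel_of_le hα1, one_mul] at hlt
    exact hlt.false
  have hmeas : Measurable fun ω => lam {y | y ∈ s ∧ φ y ω ≠ φ z ω} :=
    measurable_measure_prodMk_right <|
      (measurable_fst hs).inter (measurableSet_setOf_apply_eq_apply hφ z).compl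
  calc _ ≤ P {ω | α * lam s ≤ lam {y | y ∈ s ∧ φ y ω ≠ φ z ω}} := measure_mono hsub
    _ ≤ (∫⁻ ω, lam {y | y ∈ s ∧ φ y ω ≠ φ z ω} ∂P) / (α * lam s) :=
        meas_ge_le_lintegral_div hmeas.aemeasurable (mul_ne_zero hα0 hs0)
          (ENNReal.mul_ne_top (ne_top_of_le_ne_top ENNReal.one_ne_top hα1) hsfin)
    _ ≤ δ * lam s / (α * lam s) := by
        gcongr
        exact lintegral_measure_not_coalesced_le hφ hs z hδ
    _ = δ / α := ENNReal.mul_div_mul_right δ α hs0 hsfin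

section Metric

variable [PseudoMetricSpace M] [OpensMeasurableSpace M] [IsLocallyFiniteMeasure lam]

theorem ae_measure_fiber_pos (hφ : Measurable fun p : M × Ω => φ p.1 p.2) {z : M}
    (hz : z ∈ lam.support) (htend : Tendsto (fun y => P {ω | φ y ω ≠ φ z ω}) (𝓝 z) (𝓝 0)) :
    ∀ᵐ ω ∂P, 0 < lam {w | φ w ω = φ z ω} := by
  rw [ae_iff]
  simp only [not_lt, nonpos_iff_eq_zero]
  refine le_antisymm (ENNReal.le_of_forall_pos_le_add fun δ hδ _ => ?_) zero_le
  obtain ⟨t, ht, htfin⟩ := lam.finiteAt_nhds z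
  obtain ⟨ρ, hρ, hball⟩ := nhds_basis_closedBall.mem_iff.1 <| inter_mem ht <|
    htend.eventually (eventually_le_nhds (b := (δ / 2 : ℝ≥0∞)) (by simpa using hδ.ne'))
  have hL0 : lam (closedBall z ρ) ≠ 0 :=
    ((lam.mem_support_iff_forall z).1 hz _ (closedBall_mem_nhds z hρ)).ne'
  calc P {ω | lam {w | φ w ω = φ z ω} = 0}
      ≤ P {ω | lam {y | y ∈ closedBall z ρ ∧ φ y ω = φ z ω}
          < (1 - 2⁻¹) * lam (closedBall z ρ)} := by
        refine measure_mono fun ω (hω : _ = 0) => ?_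
        rw [Set.mem_ofPred_eq, ENNReal.one_sub_inv_two, measure_mono_null (fun y hy => hy.2) hω]
        exact ENNReal.mul_pos (by simp) hL0
    _ ≤ (δ / 2) / 2⁻¹ :=
        measure_measure_coalesced_lt_le hφ measurableSet_closedBall
          ((measure_mono fun y hy => (hball hy).1).trans_lt htfin).ne z
          (fun y hy => (hball hy).2) (by simp) (by simp)
    _ = 0 + δ := by
        rw [zero_add, div_eq_mul_inv _ 2⁻¹, inv_inv,
          ENNReal.div_mul_cancel two_ne_zero ENNReal.ofNat_ne_top]

theorem ae_ae_measure_fiber_pos [HereditarilyLindelofSpace M]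
    (hφ : Measurable fun p : M × Ω => φ p.1 p.2)
    (htend : ∀ z, Tendsto (fun y => P {ω | φ y ω ≠ φ z ω}) (𝓝 z) (𝓝 0)) :
    ∀ᵐ ω ∂P, ∀ᵐ z ∂lam, 0 < lam {w | φ w ω = φ z ω} := by
  have hmeas : MeasurableSet {q : M × Ω | 0 < lam {w | φ w q.2 = φ q.1 q.2}} :=
    measurableSet_lt measurable_const <| measurable_measure_prodMk_right <|
      measurableSet_eq_fun (hφ.comp (measurable_fst.prodMk (measurable_snd.comp measurable_snd)))
        (hφ.comp ((measurable_fst.comp measurable_snd).prodMk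
          (measurable_snd.comp measurable_snd)))
  refine (Measure.ae_ae_comm hmeas).1 ?_
  filter_upwards [lam.support_mem_ae] with z hz
  exact ae_measure_fiber_pos hφ hz (htend z)

end Metric

end Coalescence

theorem stmt11_general {M : Type*} [MetricSpace M] [SecondCountableTopology M]
    [LocallyCompactSpace M] [MeasurableSpace M] [BorelSpace M]
    {Ω : Type*} [MeasurableSpace Ω] (P : Measure Ω) [IsProbabilityMeasure P]
    (φ : M → Ω → M)
    (hmeas : Measurable fun p : M × Ω => φ p.1 p.2)
    (lam : Measure M) [IsFiniteMeasureOnCompacts lam]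
    (htend : ∀ x : M, Tendsto (fun y => P {ω | φ y ω ≠ φ x ω}) (nhds x) (nhds 0))
    (x : M) (ε : ℕ → ℝ)
    (hε : ∀ (n : ℕ) (y : M), dist x y ≤ ε n →
      P {ω | φ y ω ≠ φ x ω} ≤ (1 / 2 : ENNReal) ^ n)
    (hfin : ∀ n, lam (closedBall x (ε n)) < ⊤) :
    -- (i)
    (∀ α : ℝ, 0 < α → α < 1 → ∀ n : ℕ,
      P {ω | lam {y | y ∈ closedBall x (ε n) ∧ φ y ω = φ x ω}
          < ENNReal.ofReal (1 - α) * lam (closedBall x (ε n))}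
        ≤ ENNReal.ofReal (1 / (α * 2 ^ n))) ∧
    -- (ii)
    ((∀ n, 0 < lam (closedBall x (ε n))) →
      ∀ᵐ ω ∂P, Tendsto (fun n : ℕ =>
          (lam {y | y ∈ closedBall x (ε n) ∧ φ y ω = φ x ω}).toReal
            / (lam (closedBall x (ε n))).toReal) atTop (nhds 1)) ∧
    -- (iii)
    (∀ᵐ ω ∂P, ∀ᵐ y ∂ (lam.map fun z => φ z ω),
      0 < (lam.map fun z => φ z ω) {y}) := by
  have hi : ∀ α : ℝ, 0 < α → α < 1 → ∀ n : ℕ,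
      P {ω | lam {y | y ∈ closedBall x (ε n) ∧ φ y ω = φ x ω}
          < ENNReal.ofReal (1 - α) * lam (closedBall x (ε n))}
        ≤ (1 / 2) ^ n / ENNReal.ofReal α := fun α hα0 hα1 n => by
    rw [ENNReal.ofReal_sub 1 hα0.le, ENNReal.ofReal_one]
    exact measure_measure_coalesced_lt_le hmeas measurableSet_closedBall (hfin n).ne x
      (fun y hy => hε n y (mem_closedBall'.1 hy)) (by simpa using hα0)
      (ENNReal.ofReal_le_one.2 hα1.le)
  refine ⟨fun α hα0 hα1 n => (hi α hα0 hα1 n).trans_eq ?_, fun hpos => ?_, ?_⟩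
  · rw [ENNReal.ofReal_div_of_pos (by positivity), ENNReal.ofReal_one,
      ENNReal.ofReal_mul hα0.le, ENNReal.ofReal_pow zero_le_two, ENNReal.ofReal_ofNat]
    simp [ENNReal.div_eq_inv_mul, ENNReal.mul_inv, ENNReal.inv_pow]
  · refine ae_tendsto_toReal_div_of_tsum_ne_top (fun n => (hpos n).ne') (fun n => (hfin n).ne)
      (fun n ω => measure_mono fun y hy => hy.1) fun α hα0 hα1 =>
        ne_top_of_le_ne_top ?_ (ENNReal.tsum_le_tsum (hi α hα0 hα1))
    simp [div_eq_mul_inv, ENNReal.tsum_mul_right, ENNReal.tsum_geometric, ENNReal.mul_eq_top, hα0]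
  · filter_upwards [ae_ae_measure_fiber_pos (lam := lam) hmeas htend] with ω hω
    exact Measure.ae_map_measure_singleton_pos
      (hmeas.comp (measurable_id.prodMk measurable_const)) hω

/-- Proposition 4.1/Lemmas 4.1–4.2: let `φ = φ_{s,t}` be (a fixed time-slice of) a
stochastic coalescing flow on a locally compact separable metric space whose two-point
motion satisfies `P[φ(x) ≠ φ(y)] → 0` as `y → x`, and let `lam` be a Radon measure.
Fix `x` and radii `ε n` with `P[φ(y) ≠ φ(x)] ≤ 2⁻ⁿ` for `d(x,y) ≤ ε n`, and let
`m_{ε n}^x = lam{y ∈ B(x, ε n) : φ(y) = φ(x)}`.  Then: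
(i) `P[m_{ε n}^x < (1−α) lam(B(x, ε n))] ≤ 1/(α 2ⁿ)` for `α ∈ (0,1)`;
(ii) if the balls have positive mass, a.s. `m_{ε n}^x / lam(B(x, ε n)) → 1`;
(iii) consequently the image measure `μ = φ_* lam` is a.s. purely atomic:
a.s., for `μ`-a.e. `y`, `μ({y}) > 0`. -/
theorem stmt11 {M : Type*} [MetricSpace M] [SecondCountableTopology M]
    [LocallyCompactSpace M] [MeasurableSpace M] [BorelSpace M]
    {Ω : Type*} [MeasurableSpace Ω] (P : Measure Ω) [IsProbabilityMeasure P]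
    (φ : M → Ω → M)
    (hmeas : Measurable fun p : M × Ω => φ p.1 p.2)
    (lam : Measure M) [IsFiniteMeasureOnCompacts lam]
    (htend : ∀ x : M, Tendsto (fun y => P {ω | φ y ω ≠ φ x ω}) (nhds x) (nhds 0))
    (x : M) (ε : ℕ → ℝ) (hεpos : ∀ n, 0 < ε n)
    (hε : ∀ (n : ℕ) (y : M), dist x y ≤ ε n →
      P {ω | φ y ω ≠ φ x ω} ≤ (1 / 2 : ENNReal) ^ n)
    (hfin : ∀ n, lam (closedBall x (ε n)) < ⊤) :
    -- (i)
    (∀ α : ℝ, 0 < α → α < 1 → ∀ n : ℕ,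
      P {ω | lam {y | y ∈ closedBall x (ε n) ∧ φ y ω = φ x ω}
          < ENNReal.ofReal (1 - α) * lam (closedBall x (ε n))}
        ≤ ENNReal.ofReal (1 / (α * 2 ^ n))) ∧
    -- (ii)
    ((∀ n, 0 < lam (closedBall x (ε n))) →
      ∀ᵐ ω ∂P, Tendsto (fun n : ℕ =>
          (lam {y | y ∈ closedBall x (ε n) ∧ φ y ω = φ x ω}).toReal
            / (lam (closedBall x (ε n))).toReal) atTop (nhds 1)) ∧
    -- (iii)
    (∀ᵐ ω ∂P, ∀ᵐ y ∂ (lam.map fun z => φ z ω),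
      0 < (lam.map fun z => φ z ω) {y}) :=
  stmt11_general P φ hmeas lam htend x ε hε hfin
end

section
/- Let M be a finite set and P_t the semigroup of an irreducible aperiodic continuous-time Markov chain on M with invariant probability m. Let (φ_{s,t})_{s≤t} be the associated coalescing stochastic flow (n-point motion: n independent copies of the chain coalescing upon meeting). Define τ = inf{t > 0 : φ_{−t,0}(x) = φ_{−t,0}(y) for all x,y ∈ M}. Then τ < ∞ almost surely, the value X_τ = φ_{−τ,0}(x) does not depend on x, and the law of X_τ is exactly the invariant measure m. -/
open MeasureTheory ProbabilityTheory Filter Topology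

/-!
Pairwise forward coalescence and the cocycle property make `φ_{0,t}` constant for all large `t`
almost surely, so `P(φ_{0,t} constant) → 1`. By stationarity `φ_{-t,0}` has the law of `φ_{0,t}`,
hence `φ_{-t,0}` is constant for some `t` almost surely. The cocycle identity
`φ_{-t,0} = φ_{-u,0} ∘ φ_{-t,-u}` shows that once `φ_{-u,0}` is constant, `φ_{-t,0}(x)` stays
equal to that constant `X` for every `t ≥ u` and every `x`. Thus `φ_{-t,0}(x) → X` almost surely,
while `φ_{-t,0}(x)` has the law of `φ_{0,t}(x)`, which converges to `m`; so `X` has law `m`.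
-/

namespace CoalescingFlow

variable {M Ω : Type*}

def IsCocycle (φ : ℝ → ℝ → M → Ω → M) (ω : Ω) : Prop :=
  ∀ s u t : ℝ, s ≤ u → u ≤ t → ∀ x, φ s t x ω = φ u t (φ s u x ω) ω

def coalescedSet (φ : ℝ → ℝ → M → Ω → M) (s t : ℝ) : Set Ω :=
  {ω | ∀ x y, φ s t x ω = φ s t y ω}

section Cocycle

variable {φ : ℝ → ℝ → M → Ω → M} {ω : Ω}

theorem IsCocycle.eventually_eq_of_eq (hω : IsCocycle φ ω) {s u : ℝ} {x y : M} (hsu : s ≤ u)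
    (h : φ s u x ω = φ s u y ω) : ∀ᶠ t in atTop, φ s t x ω = φ s t y ω :=
  (eventually_ge_atTop u).mono fun t hut => by
    rw [hω s u t hsu hut x, hω s u t hsu hut y, h]

theorem IsCocycle.eventually_mem_coalescedSet [Finite M] (hω : IsCocycle φ ω) {s : ℝ}
    (h : ∀ x y, ∃ u, s ≤ u ∧ φ s u x ω = φ s u y ω) :
    ∀ᶠ t in atTop, ω ∈ coalescedSet φ s t := by
  change ∀ᶠ t in atTop, ∀ x y, φ s t x ω = φ s t y ω
  simp only [eventually_all]
  intro x y
  obtain ⟨u, hsu, hu⟩ := h x y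
  exact hω.eventually_eq_of_eq hsu hu

theorem IsCocycle.eq_of_mem_coalescedSet (hω : IsCocycle φ ω) {s u t : ℝ} (hsu : s ≤ u)
    (hut : u ≤ t) (h : ω ∈ coalescedSet φ u t) (x y : M) : φ s t x ω = φ u t y ω := by
  rw [hω s u t hsu hut x]
  exact h _ _

end Cocycle

theorem measure_exists_mem_coalescedSet_neg [Finite M] [MeasurableSpace Ω] {P : Measure Ω}
    [IsProbabilityMeasure P] {φ : ℝ → ℝ → M → Ω → M} {X : Ω → M}
    (hX : ∀ᵐ ω ∂P, ∀ x, ∀ᶠ t in atTop, φ (-t) 0 x ω = X ω) :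
    P {ω | ∃ t, 0 < t ∧ ω ∈ coalescedSet φ (-t) 0} = 1 := by
  have h : ∀ᵐ ω ∂P, ∃ t, 0 < t ∧ ω ∈ coalescedSet φ (-t) 0 := by
    filter_upwards [hX] with ω hω
    obtain ⟨t, hxt, ht⟩ := ((eventually_all.2 hω).and (eventually_gt_atTop 0)).exists
    exact ⟨t, ht, fun x y => (hxt x).trans (hxt y).symm⟩
  rw [measure_congr (eventuallyEq_univ.2 h), measure_univ]

variable [MeasurableSpace M] [MeasurableSpace Ω] {φ : ℝ → ℝ → M → Ω → M} {P : Measure Ω}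

def IsStationary (P : Measure Ω) (φ : ℝ → ℝ → M → Ω → M) : Prop :=
  ∀ s t h : ℝ, s ≤ t →
    Measure.map (fun ω => fun x => φ s t x ω) P
      = Measure.map (fun ω => fun x => φ (s + h) (t + h) x ω) P

theorem measurableSet_coalescedSet [MeasurableSingletonClass M] [Countable M] {s t : ℝ}
    (hmeas : ∀ x, Measurable (φ s t x)) : MeasurableSet (coalescedSet φ s t) := by
  simp only [coalescedSet, Set.ofPred_forall]
  exact .iInter fun x => .iInter fun y => measurableSet_eq_fun (hmeas x) (hmeas y)

theorem IsStationary.map_flow_neg (hφ : IsStationary P φ) {t : ℝ} (ht : 0 ≤ t) :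
    P.map (fun ω x => φ (-t) 0 x ω) = P.map (fun ω x => φ 0 t x ω) := by
  simpa using (hφ 0 t (-t) ht).symm

theorem IsStationary.map_eval_neg (hφ : IsStationary P φ)
    (hmeas : ∀ s t x, Measurable (φ s t x)) {t : ℝ} (ht : 0 ≤ t) (x : M) :
    P.map (φ (-t) 0 x) = P.map (φ 0 t x) := by
  have h := congrArg (Measure.map (Function.eval x)) (hφ.map_flow_neg ht)
  rwa [Measure.map_map (measurable_pi_apply x) (measurable_pi_lambda _ (hmeas _ _)),
    Measure.map_map (measurable_pi_apply x) (measurable_pi_lambda _ (hmeas _ _))] at h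

theorem IsStationary.measure_coalescedSet_neg [MeasurableSingletonClass M] [Finite M]
    (hφ : IsStationary P φ) (hmeas : ∀ s t x, Measurable (φ s t x)) {t : ℝ} (ht : 0 ≤ t) :
    P (coalescedSet φ (-t) 0) = P (coalescedSet φ 0 t) := by
  have hS : MeasurableSet {f : M → M | ∀ x y, f x = f y} := .of_discrete
  have hpre : ∀ s t, coalescedSet φ s t = (fun ω x => φ s t x ω) ⁻¹' {f | ∀ x y, f x = f y} :=
    fun _ _ => rfl
  rw [hpre, hpre, ← Measure.map_apply (measurable_pi_lambda _ (hmeas _ _)) hS, hφ.map_flow_neg ht,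
    Measure.map_apply (measurable_pi_lambda _ (hmeas _ _)) hS]

section Finite

variable [MeasurableSingletonClass M] [Finite M]

theorem tendsto_measure_coalescedSet [IsFiniteMeasure P]
    (hmeas : ∀ t x, Measurable (φ 0 t x)) (hco : ∀ᵐ ω ∂P, IsCocycle φ ω)
    (hcoal : ∀ x y, ∀ᵐ ω ∂P, ∃ t, 0 < t ∧ φ 0 t x ω = φ 0 t y ω) :
    Tendsto (fun t => P (coalescedSet φ 0 t)) atTop (𝓝 (P Set.univ)) := by
  refine tendsto_measure_of_ae_tendsto_indicator_of_isFiniteMeasure atTop MeasurableSet.univ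
    (fun t => measurableSet_coalescedSet (hmeas t)) ?_
  filter_upwards [hco, ae_all_iff.2 fun x => ae_all_iff.2 (hcoal x)] with ω hω hpairs
  refine (hω.eventually_mem_coalescedSet fun x y => ?_).mono fun t ht => by simpa using ht
  obtain ⟨u, hu, h⟩ := hpairs x y
  exact ⟨u, hu.le, h⟩

theorem IsStationary.ae_exists_mem_coalescedSet_neg [IsFiniteMeasure P] (hφ : IsStationary P φ)
    (hmeas : ∀ s t x, Measurable (φ s t x))
    (hfwd : Tendsto (fun t => P (coalescedSet φ 0 t)) atTop (𝓝 (P Set.univ))) :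
    ∀ᵐ ω ∂P, ∃ n : ℕ, ω ∈ coalescedSet φ (-n) 0 := by
  have hE : MeasurableSet (⋃ n : ℕ, coalescedSet φ (-n) 0) :=
    .iUnion fun n => measurableSet_coalescedSet (hmeas _ _)
  suffices P (⋃ n : ℕ, coalescedSet φ (-n) 0) = P Set.univ by
    simpa only [Set.mem_iUnion] using (ae_mem_iff_measure_eq hE.nullMeasurableSet).2 this
  refine le_antisymm (measure_mono (Set.subset_univ _)) ?_
  refine le_of_tendsto (hfwd.comp tendsto_natCast_atTop_atTop) (Eventually.of_forall fun n => ?_)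
  rw [Function.comp_apply, ← hφ.measure_coalescedSet_neg hmeas n.cast_nonneg]
  exact measure_mono (Set.subset_iUnion (fun n : ℕ => coalescedSet φ (-n) 0) n)

/-- The limit is read off at the first integer time `n` at which `φ_{-n,0}` is constant. -/
theorem exists_measurable_eventually_eq_neg [Nonempty M]
    (hmeas : ∀ s t x, Measurable (φ s t x)) (hco : ∀ᵐ ω ∂P, IsCocycle φ ω)
    (hback : ∀ᵐ ω ∂P, ∃ n : ℕ, ω ∈ coalescedSet φ (-n) 0) :
    ∃ X : Ω → M, Measurable X ∧ ∀ᵐ ω ∂P, ∀ x, ∀ᶠ t in atTop, φ (-t) 0 x ω = X ω := by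
  classical
  set E := ⋃ n : ℕ, coalescedSet φ (-n) 0
  have hD : ∀ n : ℕ, MeasurableSet (coalescedSet φ (-n) 0) := fun n =>
    measurableSet_coalescedSet (hmeas _ _)
  have hfind : ∀ ω, ∃ n : ℕ, ω ∉ E ∨ ω ∈ coalescedSet φ (-n) 0 := fun ω => by
    by_cases hω : ω ∈ E
    · obtain ⟨n, hn⟩ := Set.mem_iUnion.1 hω
      exact ⟨n, .inr hn⟩
    · exact ⟨0, .inl hω⟩
  have hN : Measurable fun ω => Nat.find (hfind ω) :=
    measurable_find hfind fun k => (MeasurableSet.iUnion hD).compl.union (hD k)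
  refine ⟨fun ω => φ (-(Nat.find (hfind ω) : ℝ)) 0 (Classical.arbitrary M) ω,
    (measurable_from_prod_countable_left
      (f := fun p : Ω × ℕ => φ (-(p.2 : ℝ)) 0 (Classical.arbitrary M) p.1)
      fun n => hmeas (-(n : ℝ)) 0 _).comp (measurable_id.prodMk hN), ?_⟩
  filter_upwards [hco, hback] with ω hω ⟨n, hn⟩ x
  have hmem := (Nat.find_spec (hfind ω)).resolve_left (not_not.2 (Set.mem_iUnion.2 ⟨n, hn⟩))
  filter_upwards [eventually_ge_atTop (Nat.find (hfind ω) : ℝ)] with t ht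
  exact hω.eq_of_mem_coalescedSet (neg_le_neg ht) (by simp) hmem x _

end Finite

theorem IsStationary.map_eq_of_eventually_eq [MeasurableSingletonClass M] [IsFiniteMeasure P]
    (hφ : IsStationary P φ) (hmeas : ∀ s t x, Measurable (φ s t x)) {x₀ : M} {X : Ω → M}
    (hXm : Measurable X) (hX : ∀ᵐ ω ∂P, ∀ᶠ t in atTop, φ (-t) 0 x₀ ω = X ω) {m : Measure M}
    (hconv : ∀ A, Tendsto (fun t => P.map (φ 0 t x₀) A) atTop (𝓝 (m A))) :
    P.map X = m := by
  ext A hA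
  refine tendsto_nhds_unique ?_ (hconv A)
  rw [Measure.map_apply hXm hA]
  refine (tendsto_measure_of_ae_tendsto_indicator_of_isFiniteMeasure atTop (hXm hA)
    (fun t => hmeas (-t) 0 x₀ hA) (hX.mono fun ω hω => hω.mono fun t ht => ?_)).congr' ?_
  · simp [Set.mem_preimage, ht]
  · filter_upwards [eventually_ge_atTop 0] with t ht
    rw [← Measure.map_apply (hmeas _ _ _) hA, hφ.map_eval_neg hmeas ht]

end CoalescingFlow

open CoalescingFlow

theorem stmt12_general {M : Type*} [Fintype M] [Nonempty M]
    [MeasurableSpace M] [MeasurableSingletonClass M]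
    {Ω : Type*} [MeasurableSpace Ω] (P : Measure Ω) [IsProbabilityMeasure P]
    (φ : ℝ → ℝ → M → Ω → M)
    (hmeas : ∀ s t x, Measurable fun ω => φ s t x ω)
    (hco : ∀ᵐ ω ∂P, ∀ s u t : ℝ, s ≤ u → u ≤ t → ∀ x, φ s t x ω = φ u t (φ s u x ω) ω)
    (hstat : ∀ s t h : ℝ, s ≤ t →
      Measure.map (fun ω => fun x => φ s t x ω) P
        = Measure.map (fun ω => fun x => φ (s + h) (t + h) x ω) P)
    (hcoal : ∀ x y : M, ∀ᵐ ω ∂P, ∃ t : ℝ, 0 < t ∧ φ 0 t x ω = φ 0 t y ω)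
    (m : Measure M)
    (hconv : ∀ (x : M) (A : Set M),
      Tendsto (fun t : ℝ => Measure.map (fun ω => φ 0 t x ω) P A) atTop (nhds (m A))) :
    P {ω | ∃ t : ℝ, 0 < t ∧ ∀ x y : M, φ (-t) 0 x ω = φ (-t) 0 y ω} = 1 ∧
    ∃ X : Ω → M, Measurable X ∧
      (∀ᵐ ω ∂P, ∀ x : M, ∀ᶠ t in (atTop : Filter ℝ), φ (-t) 0 x ω = X ω) ∧
      Measure.map X P = m := by
  have hfwd := tendsto_measure_coalescedSet (hmeas 0) hco hcoal
  obtain ⟨X, hXm, hX⟩ := exists_measurable_eventually_eq_neg hmeas hco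
    (IsStationary.ae_exists_mem_coalescedSet_neg hstat hmeas hfwd)
  refine ⟨measure_exists_mem_coalescedSet_neg hX, X, hXm, hX, ?_⟩
  exact IsStationary.map_eq_of_eventually_eq hstat hmeas hXm
    (hX.mono fun ω hω => hω (Classical.arbitrary M)) (hconv _)

/-- Propp–Wilson / coupling-from-the-past: for the coalescing stochastic flow `φ`
associated with an irreducible aperiodic Markov chain on a finite state space `M`
(stationary flow with a.s. cocycle property, pairwise coalescence in finite time,
whose one-point motion converges in law to the invariant probability `m`), the backward
coalescence time `τ = inf{t > 0 : φ_{−t,0} is constant}` is a.s. finite, the common value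
`X = φ_{−τ,0}(x)` does not depend on `x`, and the law of `X` is exactly `m`. -/
theorem stmt12 {M : Type*} [Fintype M] [Nonempty M]
    [MeasurableSpace M] [MeasurableSingletonClass M]
    {Ω : Type*} [MeasurableSpace Ω] (P : Measure Ω) [IsProbabilityMeasure P]
    (φ : ℝ → ℝ → M → Ω → M)
    (hmeas : ∀ s t x, Measurable fun ω => φ s t x ω)
    (hco : ∀ᵐ ω ∂P, ∀ s u t : ℝ, s ≤ u → u ≤ t → ∀ x, φ s t x ω = φ u t (φ s u x ω) ω)
    (hstat : ∀ s t h : ℝ, s ≤ t →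
      Measure.map (fun ω => fun x => φ s t x ω) P
        = Measure.map (fun ω => fun x => φ (s + h) (t + h) x ω) P)
    (hindep : ∀ s t u : ℝ, s ≤ t → t ≤ u →
      IndepFun (fun ω => fun x => φ s t x ω) (fun ω => fun x => φ t u x ω) P)
    (hcoal : ∀ x y : M, ∀ᵐ ω ∂P, ∃ t : ℝ, 0 < t ∧ φ 0 t x ω = φ 0 t y ω)
    (m : Measure M) [IsProbabilityMeasure m]
    (hconv : ∀ (x : M) (A : Set M),
      Tendsto (fun t : ℝ => Measure.map (fun ω => φ 0 t x ω) P A) atTop (nhds (m A))) :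
    P {ω | ∃ t : ℝ, 0 < t ∧ ∀ x y : M, φ (-t) 0 x ω = φ (-t) 0 y ω} = 1 ∧
    ∃ X : Ω → M, Measurable X ∧
      (∀ᵐ ω ∂P, ∀ x : M, ∀ᶠ t in (atTop : Filter ℝ), φ (-t) 0 x ω = X ω) ∧
      Measure.map X P = m :=
  stmt12_general P φ hmeas hco hstat hcoal m hconv
end
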